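/- arXiv:2201.03525 — 4 statements merged into one kernel-verified Lean document; each statement's English description precedes it below -/
import Mathlib

section
/- Strict subadditivity against the profile at infinity implies L¹-compactness of minimizing sequences: Let (X, d, μ) be a noncompact metric measure space satisfying (H1)–(H5), and assume the isoperimetric profile I_X is real-valued and continuous on (0, μ(X)). Let V ∈ (0, μ(X)) and suppose that I_X(V) < I_X(V_1) + I^∞_X(V_2) for all V_1, V_2 ≥ 0 with V_1 + V_2 = V and V_2 ∈ (0, V] (here I_X(0) := 0). Then every sequence of Borel sets Ω_k ⊆ X with lim_k μ(Ω_k) = V and lim_k P(Ω_k) = I_X(V) admits a subsequence Ω_{k_j} and a Borel set Ω ⊆ X with μ(Ω) = V such that χ_{Ω_{k_j}} → χ_Ω in L¹(X, μ). -/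
open Filter MeasureTheory Metric Set Topology
open scoped ENNReal NNReal

noncomputable section

variable {X : Type*} [MetricSpace X] [MeasurableSpace X]

/-- `u` is locally Lipschitz on the set `A`. -/
def LocLipschitzOn (u : X → ℝ) (A : Set X) : Prop :=
  ∀ x ∈ A, ∃ K : NNReal, ∃ t ∈ 𝓝[A] x, LipschitzOnWith K u t

/-- The slope `lip u (x)` of `u` at `x` (equal to `0` at isolated points). -/
def lipSlope (u : X → ℝ) (x : X) : ℝ≥0∞ :=
  Filter.limsup (fun y => ENNReal.ofReal (|u y - u x| / dist y x)) (𝓝[≠] x)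

/-- Convergence `u i → f` in `L¹(B, μ)`. -/
def TendstoL1On (μ : Measure X) (B : Set X) (u : ℕ → X → ℝ) (f : X → ℝ) : Prop :=
  Tendsto (fun i => ∫⁻ x in B, ENNReal.ofReal |u i x - f x| ∂μ) atTop (𝓝 0)

/-- Convergence `u i → f` in `L¹_loc(A, μ)`, i.e. in `L¹(K, μ)` for every compact `K ⊆ A`. -/
def TendstoL1LocOn (μ : Measure X) (A : Set X) (u : ℕ → X → ℝ) (f : X → ℝ) : Prop :=
  ∀ K : Set X, K ⊆ A → IsCompact K → TendstoL1On μ K u f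

/-- The relative perimeter `P(E, A)` of a Borel set `E` in an open set `A`. -/
def perim (μ : Measure X) (E A : Set X) : ℝ≥0∞ :=
  ⨅ (u : ℕ → X → ℝ) (_ : ∀ i, LocLipschitzOn (u i) A)
    (_ : TendstoL1LocOn μ A u (E.indicator 1)),
    Filter.liminf (fun i => ∫⁻ x in A, lipSlope (u i) x ∂μ) atTop

/-- The perimeter `P(E) := P(E, X)`. -/
def Perim (μ : Measure X) (E : Set X) : ℝ≥0∞ := perim μ E Set.univ

/-- The isoperimetric profile `I_X`. -/
def isoProfile (μ : Measure X) (V : ℝ) : ℝ≥0∞ :=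
  ⨅ (E : Set X) (_ : MeasurableSet E) (_ : μ E = ENNReal.ofReal V), Perim μ E

/-- The measure is finite on bounded sets. -/
def FiniteOnBounded (μ : Measure X) : Prop :=
  ∀ s : Set X, Bornology.IsBounded s → μ s < ⊤

/-- The support of the measure is the whole space. -/
def FullSupport (μ : Measure X) : Prop :=
  ∀ (x : X) (r : ℝ), 0 < r → 0 < μ (ball x r)

/-- (H1) BV compactness. -/
def BVCompactness (μ : Measure X) : Prop :=
  ∀ E : ℕ → Set X, (∀ i, MeasurableSet (E i)) →
    (∃ M : ℝ≥0∞, M ≠ ⊤ ∧ ∀ i, μ (E i) + Perim μ (E i) ≤ M) →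
    ∃ φ : ℕ → ℕ, StrictMono φ ∧ ∃ F : Set X, MeasurableSet F ∧
      ∀ (x : X) (r : ℝ), 0 < r →
        TendstoL1On μ (ball x r) (fun k => (E (φ k)).indicator 1) (F.indicator 1)

/-- (H2) Cut property. -/
def CutProperty (μ : Measure X) : Prop :=
  ∀ E : Set X, MeasurableSet E → Perim μ E ≠ ⊤ → ∀ o : X,
    ∀ᵐ r ∂(volume.restrict (Set.Ioi (0:ℝ))),
      Perim μ (E ∩ ball o r) ≤ perim μ E (ball o r) +
          ENNReal.ofReal (deriv (fun s => (μ (E ∩ ball o s)).toReal) r) ∧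
      Perim μ (E \ ball o r) ≤ perim μ E (closure (ball o r))ᶜ +
          ENNReal.ofReal (deriv (fun s => (μ (E ∩ ball o s)).toReal) r)

/-- (H3) The perimeter of balls of radius `r` vanishes uniformly as `r → 0⁺`. -/
def SmallBallPerimeter (μ : Measure X) : Prop :=
  Tendsto (fun r : ℝ => ⨆ x : X, Perim μ (ball x r)) (𝓝[>] 0) (𝓝 0)

/-- (H4) Continuity of the volume of balls. -/
def BallVolContinuous (μ : Measure X) : Prop :=
  ∀ x : X, ContinuousOn (fun r : ℝ => (μ (ball x r)).toReal) (Set.Ioi (0:ℝ))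

/-- (H5) `μ` is uniformly locally doubling. -/
def UnifLocDoubling (μ : Measure X) : Prop :=
  ∀ R : ℝ, 0 < R → ∃ C : ℝ≥0∞, C ≠ ⊤ ∧
    ∀ (x : X) (r : ℝ), 0 < r → r ≤ R → μ (ball x (2*r)) ≤ C * μ (ball x r)

/-- The isoperimetric profile at infinity `I^∞_X`. -/
def isoProfileAtInfty (μ : Measure X) (V : ℝ) : ℝ≥0∞ :=
  ⨅ (E : ℕ → Set X) (_ : ∀ i, MeasurableSet (E i))
    (_ : Tendsto (fun i => μ (E i)) atTop (𝓝 (ENNReal.ofReal V)))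
    (_ : ∀ (x : X) (r : ℝ), 0 < r → ∀ᶠ i in atTop, E i ∩ ball x r = ∅),
    Filter.liminf (fun i => Perim μ (E i)) atTop

/-- The isoperimetric profile at infinity volumewise `Ĩ^∞_X`. -/
def isoProfileAtInftyVol (μ : Measure X) (V : ℝ) : ℝ≥0∞ :=
  ⨅ (E : ℕ → Set X) (_ : ∀ i, MeasurableSet (E i))
    (_ : Tendsto (fun i => μ (E i)) atTop (𝓝 (ENNReal.ofReal V)))
    (_ : ∀ (x : X) (r : ℝ), 0 < r →
      Tendsto (fun i => μ (E i ∩ ball x r)) atTop (𝓝 0)),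
    Filter.liminf (fun i => Perim μ (E i)) atTop

/-- The open interval `(0, μ(X))` of admissible volumes. -/
def profileDomain (μ : Measure X) : Set ℝ :=
  {V : ℝ | 0 < V ∧ ENNReal.ofReal V < μ Set.univ}

/-!
By (H1) a subsequence converges in `L¹_loc` to some `F`, and `μ F ≤ V`. If `μ F = V`, no mass
escapes to infinity and the convergence is global. Otherwise `W := μ F < V`. Cut `Ωₙ` along a
sphere of radius `rₙ ∈ (Rₙ, 2Rₙ)`, `Rₙ → ∞`, at which the derivative of `r ↦ μ (Ωₙ ∩ B_r)` is at
most its mean slope `O(1/Rₙ)`: by (H2) this splits `Ωₙ` into a part of volume `→ W` and a part of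
volume `→ V - W` that escapes to infinity, at a perimeter cost that vanishes. Lower
semicontinuity of `I_X` along volumes (from its continuity) and the definition of `I^∞_X` give
`I_X(W) + I^∞_X(V - W) ≤ I_X(V)`, contradicting strict subadditivity.
-/

open scoped symmDiff

theorem ENNReal.le_liminf_add {ι : Type*} {f : Filter ι} (u v : ι → ℝ≥0∞) :
    liminf u f + liminf v f ≤ liminf (fun i => u i + v i) f := by
  rcases eq_or_ne (liminf u f) 0 with hu | hu
  · simpa [hu] using liminf_le_liminf (.of_forall fun i => le_add_self)
  rcases eq_or_ne (liminf v f) 0 with hv | hv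
  · simpa [hv] using liminf_le_liminf (.of_forall fun i => le_self_add)
  refine (le_liminf_iff (by isBoundedDefault) (by isBoundedDefault)).2 fun c hc => ?_
  obtain ⟨a, ha, b, hb, hab⟩ := ENNReal.exists_lt_add_of_lt_add hc hu hv
  filter_upwards [eventually_lt_of_lt_liminf ha, eventually_lt_of_lt_liminf hb] with i hai hbi
  exact hab.trans (ENNReal.add_lt_add hai hbi)

theorem ENNReal.exists_strictMono_tendsto_diag {f : ℕ → ℕ → ℝ≥0∞}
    (hf : ∀ n, Tendsto (fun k => f k n) atTop (𝓝 0)) :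
    ∃ ψ : ℕ → ℕ, StrictMono ψ ∧ Tendsto (fun n => f (ψ n) n) atTop (𝓝 0) := by
  obtain ⟨ψ, hψ, hle⟩ := extraction_forall_of_eventually fun n =>
    ENNReal.tendsto_nhds_zero.1 (hf n) (n : ℝ≥0∞)⁻¹ (ENNReal.inv_pos.2 (ENNReal.natCast_ne_top n))
  exact ⟨ψ, hψ, tendsto_of_tendsto_of_tendsto_of_le_of_le tendsto_const_nhds
    ENNReal.tendsto_inv_nat_nhds_zero (fun n => zero_le) hle⟩

theorem MonotoneOn.exists_deriv_le_slope {m : ℝ → ℝ} {a b : ℝ} (hm : MonotoneOn m (Icc a b))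
    (hab : a < b) {P : ℝ → Prop} (hP : ∀ᵐ r ∂volume.restrict (Ioo a b), P r) :
    ∃ r ∈ Ioo a b, P r ∧ deriv m r ≤ (m b - m a) / (b - a) := by
  by_contra! hlt
  have hm' : MonotoneOn m (uIcc a b) := by rwa [uIcc_of_le hab.le]
  have hfull : ∀ᵐ r ∂volume.restrict (Ioc a b), (m b - m a) / (b - a) < deriv m r := by
    rw [Measure.restrict_congr_set Ioo_ae_eq_Ioc.symm]
    filter_upwards [hP, ae_restrict_mem measurableSet_Ioo] with r hr hrab
    exact hlt r hrab hr
  have hpos : (volume.restrict (Ioc a b)) {r | (m b - m a) / (b - a) < deriv m r} ≠ 0 := by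
    intro h0
    have : (ae (volume.restrict (Ioc a b))).NeBot := ae_neBot.2 (by simp [hab])
    obtain ⟨r, hr, hr'⟩ := (hfull.and (measure_eq_zero_iff_ae_notMem.1 h0)).exists
    exact hr' hr
  have hint := intervalIntegral.integral_lt_integral_of_ae_le_of_measure_setOfPred_lt_ne_zero
    hab.le intervalIntegrable_const hm'.intervalIntegrable_deriv (hfull.mono fun r => le_of_lt) hpos
  have hmab : 0 ≤ m b - m a :=
    sub_nonneg.2 (hm (left_mem_Icc.2 hab.le) (right_mem_Icc.2 hab.le) hab.le)
  have hle := (hm'.intervalIntegral_deriv_mem_uIcc).2.trans (max_le hmab le_rfl)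
  rw [intervalIntegral.integral_const, smul_eq_mul, mul_div_cancel₀ _ (sub_ne_zero.2 hab.ne')]
    at hint
  exact hint.not_ge hle

theorem lintegral_abs_indicator_sub_indicator {α : Type*} [MeasurableSpace α] (μ : Measure α)
    {E F : Set α} (hE : MeasurableSet E) (hF : MeasurableSet F) (B : Set α) :
    ∫⁻ x in B, ENNReal.ofReal |E.indicator (1 : α → ℝ) x - F.indicator 1 x| ∂μ
      = μ (E ∆ F ∩ B) := by
  have hpt : (fun x => ENNReal.ofReal |E.indicator (1 : α → ℝ) x - F.indicator 1 x|)
      = (E ∆ F).indicator 1 := by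
    funext x
    by_cases hxE : x ∈ E <;> by_cases hxF : x ∈ F <;> simp [hxE, hxF, mem_symmDiff]
  rw [hpt, lintegral_indicator_one (hE.symmDiff hF), Measure.restrict_apply (hE.symmDiff hF)]

theorem tendstoL1On_indicator_iff {α : Type*} [MeasurableSpace α] (μ : Measure α)
    {E : ℕ → Set α} {F : Set α} (hE : ∀ k, MeasurableSet (E k)) (hF : MeasurableSet F)
    (B : Set α) :
    TendstoL1On μ B (fun k => (E k).indicator 1) (F.indicator 1)
      ↔ Tendsto (fun k => μ (E k ∆ F ∩ B)) atTop (𝓝 0) :=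
  tendsto_congr fun k => lintegral_abs_indicator_sub_indicator μ (hE k) hF B

theorem tendsto_measure_of_tendsto_measure_symmDiff {α ι : Type*} [MeasurableSpace α]
    {μ : Measure α} {l : Filter ι} {A B : ι → Set α} {c : ℝ≥0∞}
    (hAB : Tendsto (fun i => μ (A i ∆ B i)) l (𝓝 0)) (hB : Tendsto (fun i => μ (B i)) l (𝓝 c)) :
    Tendsto (fun i => μ (A i)) l (𝓝 c) := by
  have hlower : Tendsto (fun i => μ (B i) - μ (A i ∆ B i)) l (𝓝 c) := by
    simpa using ENNReal.Tendsto.sub hB hAB (.inr ENNReal.zero_ne_top)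
  have hupper : Tendsto (fun i => μ (B i) + μ (A i ∆ B i)) l (𝓝 c) := by
    simpa using hB.add hAB
  refine tendsto_of_tendsto_of_tendsto_of_le_of_le hlower hupper (fun i => ?_) (fun i => ?_)
  · rw [tsub_le_iff_right, symmDiff_comm]
    exact tsub_le_iff_left.1 le_measure_symmDiff
  · exact add_comm (μ (B i)) _ ▸ tsub_le_iff_right.1 le_measure_symmDiff

theorem eventually_sdiff_ball_inter_ball_eq_empty {α ι : Type*} [PseudoMetricSpace α]
    {l : Filter ι} {r : ι → ℝ} (hr : Tendsto r l atTop) (E : ι → Set α) (o x : α) (ρ : ℝ) :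
    ∀ᶠ i in l, (E i \ ball o (r i)) ∩ ball x ρ = ∅ := by
  filter_upwards [hr.eventually_ge_atTop (dist x o + ρ)] with i hi
  refine eq_empty_of_forall_notMem fun y ⟨⟨_, hyo⟩, hyx⟩ => hyo (mem_ball.2 ?_)
  linarith [dist_triangle y x o, mem_ball.1 hyx]

section Convergence

variable {ι : Type*} {l : Filter ι} {μ : Measure X}

theorem tendsto_measure_inter_ball {r : ι → ℝ} (hr : Tendsto r l atTop) (F : Set X) (o : X) :
    Tendsto (fun i => μ (F ∩ ball o (r i))) l (𝓝 (μ F)) := by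
  have hmono : Monotone fun R : ℝ => F ∩ ball o R := fun R R' h =>
    inter_subset_inter_right F (ball_subset_ball h)
  have hunion : ⋃ R : ℝ, F ∩ ball o R = F := by
    rw [← inter_iUnion, eq_univ_of_forall fun x => mem_iUnion.2 ⟨dist x o + 1, by simp⟩,
      inter_univ]
  simpa [hunion, Function.comp_def] using (tendsto_measure_iUnion_atTop hmono).comp hr

variable {G : ι → Set X} {F : Set X} {o : X}

theorem tendsto_measure_inter_ball_of_tendsto_symmDiff
    (hloc : ∀ R > 0, Tendsto (fun i => μ (G i ∆ F ∩ ball o R)) l (𝓝 0)) {R : ℝ} (hR : 0 < R) :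
    Tendsto (fun i => μ (G i ∩ ball o R)) l (𝓝 (μ (F ∩ ball o R))) :=
  tendsto_measure_of_tendsto_measure_symmDiff
    (by simpa only [inter_symmDiff_distrib_right] using hloc R hR) tendsto_const_nhds

theorem measure_le_of_tendsto_symmDiff_inter_ball [l.NeBot] {v : ℝ≥0∞}
    (hG : Tendsto (fun i => μ (G i)) l (𝓝 v))
    (hloc : ∀ R > 0, Tendsto (fun i => μ (G i ∆ F ∩ ball o R)) l (𝓝 0)) : μ F ≤ v := by
  refine le_of_tendsto (tendsto_measure_inter_ball tendsto_id F o)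
    ((eventually_gt_atTop 0).mono fun R hR => ?_)
  exact le_of_tendsto_of_tendsto (tendsto_measure_inter_ball_of_tendsto_symmDiff hloc hR) hG
    (.of_forall fun i => measure_mono inter_subset_left)

theorem measure_sdiff_ball_eq [OpensMeasurableSpace X] {s : Set X} (R : ℝ)
    (hs : μ (s ∩ ball o R) ≠ ⊤) : μ (s \ ball o R) = μ s - μ (s ∩ ball o R) :=
  ENNReal.eq_sub_of_add_eq hs ((add_comm _ _).trans (measure_inter_add_sdiff s measurableSet_ball))

theorem tendsto_measure_symmDiff_of_tendsto_measure [OpensMeasurableSpace X] (hF : μ F ≠ ⊤)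
    (hGfin : ∀ i, μ (G i) ≠ ⊤) (hG : Tendsto (fun i => μ (G i)) l (𝓝 (μ F)))
    (hloc : ∀ R > 0, Tendsto (fun i => μ (G i ∆ F ∩ ball o R)) l (𝓝 0)) :
    Tendsto (fun i => μ (G i ∆ F)) l (𝓝 0) := by
  set tail : ℝ → ℝ≥0∞ := fun R => μ F - μ (F ∩ ball o R)
  have htail : Tendsto (fun R => tail R + tail R) atTop (𝓝 0) := by
    have h := ENNReal.Tendsto.sub tendsto_const_nhds
      (tendsto_measure_inter_ball (μ := μ) tendsto_id F o) (.inl hF)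
    simpa using h.add h
  rw [ENNReal.tendsto_nhds_zero]
  intro ε hε
  obtain ⟨R, hR, hRε⟩ := ((eventually_gt_atTop 0).and (htail.eventually (gt_mem_nhds hε))).exists
  have hbound : Tendsto
      (fun i => μ (G i ∆ F ∩ ball o R) + ((μ (G i) - μ (G i ∩ ball o R)) + tail R))
      l (𝓝 (0 + (tail R + tail R))) :=
    (hloc R hR).add ((ENNReal.Tendsto.sub hG
      (tendsto_measure_inter_ball_of_tendsto_symmDiff hloc hR) (.inl hF)).add tendsto_const_nhds)
  filter_upwards [hbound.eventually (gt_mem_nhds (by simpa using hRε))] with i hi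
  have hfin : ∀ s : Set X, μ s ≠ ⊤ → μ (s ∩ ball o R) ≠ ⊤ := fun s hs =>
    ne_top_of_le_ne_top hs (measure_mono inter_subset_left)
  refine le_of_lt (lt_of_le_of_lt ?_ hi)
  calc μ (G i ∆ F) ≤ μ (G i ∆ F ∩ ball o R) + μ (G i ∆ F \ ball o R) :=
        measure_le_inter_add_sdiff μ _ _
    _ ≤ μ (G i ∆ F ∩ ball o R) + (μ (G i \ ball o R) + μ (F \ ball o R)) := by
        gcongr
        refine (measure_mono fun x hx => ?_).trans (measure_union_le _ _)
        rcases hx with ⟨⟨hG, -⟩ | ⟨hF, -⟩, hB⟩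
        exacts [.inl ⟨hG, hB⟩, .inr ⟨hF, hB⟩]
    _ = _ := by rw [measure_sdiff_ball_eq R (hfin _ (hGfin i)), measure_sdiff_ball_eq R (hfin _ hF)]

end Convergence

theorem Perim_empty (μ : Measure X) : Perim μ (∅ : Set X) = 0 := by
  have lipSlope_zero : ∀ x, lipSlope (fun _ : X => (0 : ℝ)) x = 0 := fun x =>
    le_antisymm (limsup_le_of_le (h := .of_forall fun y => by simp)) zero_le
  have hlip : ∀ _ : ℕ, LocLipschitzOn (fun _ : X => (0 : ℝ)) univ := fun _ _ _ =>
    ⟨0, univ, univ_mem, (LipschitzWith.const (0 : ℝ)).lipschitzOnWith⟩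
  have hL1 : TendstoL1LocOn μ univ (fun _ (_ : X) => (0 : ℝ)) ((∅ : Set X).indicator 1) :=
    fun K _ _ => by simp [TendstoL1On]
  refine le_antisymm ?_ zero_le
  calc Perim μ ∅ ≤ liminf (fun _ : ℕ => ∫⁻ x in univ, lipSlope (fun _ : X => (0 : ℝ)) x ∂μ) atTop :=
        iInf_le_of_le _ (iInf_le_of_le hlip (iInf_le _ hL1))
    _ = 0 := by simp [lipSlope_zero]

theorem isoProfile_le_Perim (μ : Measure X) {E : Set X} (hE : MeasurableSet E) {v : ℝ}
    (hv : μ E = ENNReal.ofReal v) : isoProfile μ v ≤ Perim μ E :=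
  iInf_le_of_le E (iInf_le_of_le hE (iInf_le _ hv))

theorem isoProfile_zero (μ : Measure X) : isoProfile μ 0 = 0 :=
  le_antisymm ((isoProfile_le_Perim μ .empty (by simp)).trans (Perim_empty μ).le) zero_le

theorem perim_add_perim_le_Perim (μ : Measure X) (E : Set X) {A B : Set X}
    (hB : MeasurableSet B) (hAB : Disjoint A B) : perim μ E A + perim μ E B ≤ Perim μ E := by
  refine le_iInf fun u => le_iInf fun hu => le_iInf fun hL1 => ?_
  have hperim : ∀ S : Set X, perim μ E S ≤ liminf (fun i => ∫⁻ x in S, lipSlope (u i) x ∂μ) atTop :=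
    fun S => iInf_le_of_le u (iInf_le_of_le
      (fun i x _ => (hu i x (mem_univ x)).imp fun K ⟨t, ht, hK⟩ =>
        ⟨t, nhdsWithin_mono x (subset_univ S) ht, hK⟩)
      (iInf_le _ fun K _ hK => hL1 K (subset_univ K) hK))
  have hsplit : ∀ i, (∫⁻ x in A, lipSlope (u i) x ∂μ) + ∫⁻ x in B, lipSlope (u i) x ∂μ
      ≤ ∫⁻ x in univ, lipSlope (u i) x ∂μ := fun i => by
    rw [← lintegral_union hB hAB]
    exact lintegral_mono_set (subset_univ _)
  calc perim μ E A + perim μ E B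
      ≤ liminf (fun i => ∫⁻ x in A, lipSlope (u i) x ∂μ) atTop
        + liminf (fun i => ∫⁻ x in B, lipSlope (u i) x ∂μ) atTop := add_le_add (hperim A) (hperim B)
    _ ≤ _ := ENNReal.le_liminf_add _ _
    _ ≤ _ := liminf_le_liminf (.of_forall hsplit)

theorem CutProperty.exists_radius_Perim_add_Perim_le [OpensMeasurableSpace X] {μ : Measure X}
    (hcut : CutProperty μ) {E : Set X} (hE : MeasurableSet E) (hP : Perim μ E ≠ ⊤)
    (hμE : μ E ≠ ⊤) (o : X) {R : ℝ} (hR : 0 < R) :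
    ∃ r ∈ Ioo R (2 * R), Perim μ (E ∩ ball o r) + Perim μ (E \ ball o r)
      ≤ Perim μ E + 2 * ENNReal.ofReal ((μ E).toReal / R) := by
  set m : ℝ → ℝ := fun s => (μ (E ∩ ball o s)).toReal
  have hm : Monotone m := fun s t hst =>
    ENNReal.toReal_mono (ne_top_of_le_ne_top hμE (measure_mono inter_subset_left))
      (measure_mono (inter_subset_inter_right _ (ball_subset_ball hst)))
  obtain ⟨r, hr, hcut_r, hderiv⟩ :=
    (hm.monotoneOn (Icc R (2 * R))).exists_deriv_le_slope (by linarith)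
    (ae_restrict_of_ae_restrict_of_subset (fun s hs => hR.trans hs.1) (hcut E hE hP o))
  have hslope : (m (2 * R) - m R) / (2 * R - R) ≤ (μ E).toReal / R := by
    have hm2R : m (2 * R) ≤ (μ E).toReal := ENNReal.toReal_mono hμE (measure_mono inter_subset_left)
    rw [show 2 * R - R = R by ring]
    gcongr
    linarith [ENNReal.toReal_nonneg (a := μ (E ∩ ball o R))]
  have hsplit : perim μ E (ball o r) + perim μ E (closure (ball o r))ᶜ ≤ Perim μ E :=
    perim_add_perim_le_Perim μ E isClosed_closure.measurableSet.compl
      (disjoint_compl_right.mono_left subset_closure)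
  refine ⟨r, hr, ?_⟩
  calc Perim μ (E ∩ ball o r) + Perim μ (E \ ball o r)
      ≤ (perim μ E (ball o r) + ENNReal.ofReal (deriv m r))
        + (perim μ E (closure (ball o r))ᶜ + ENNReal.ofReal (deriv m r)) :=
        add_le_add hcut_r.1 hcut_r.2
    _ = (perim μ E (ball o r) + perim μ E (closure (ball o r))ᶜ)
        + 2 * ENNReal.ofReal (deriv m r) := by ring
    _ ≤ _ := by gcongr; exact hderiv.trans hslope

theorem isoProfile_le_liminf_Perim {μ : Measure X} {W : ℝ} (hW : W ∈ profileDomain μ)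
    (hIW : isoProfile μ W ≠ ⊤)
    (hcont : ContinuousWithinAt (fun v => (isoProfile μ v).toReal) (profileDomain μ) W)
    {E : ℕ → Set X} (hE : ∀ n, MeasurableSet (E n))
    (hvol : Tendsto (fun n => μ (E n)) atTop (𝓝 (ENNReal.ofReal W))) :
    isoProfile μ W ≤ liminf (fun n => Perim μ (E n)) atTop := by
  set v : ℕ → ℝ := fun n => (μ (E n)).toReal
  have hfin : ∀ᶠ n in atTop, μ (E n) ≠ ⊤ := hvol.eventually_ne ENNReal.ofReal_ne_top
  have hv : Tendsto v atTop (𝓝 W) := by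
    simpa [v, hW.1.le, Function.comp_def] using
      (ENNReal.tendsto_toReal ENNReal.ofReal_ne_top).comp hvol
  have hdom : ∀ᶠ n in atTop, v n ∈ profileDomain μ := by
    filter_upwards [hv.eventually_const_lt hW.1, hvol.eventually_lt_const hW.2, hfin]
      with n hpos hlt hn
    exact ⟨hpos, by rwa [ENNReal.ofReal_toReal hn]⟩
  have hI : Tendsto (fun n => ENNReal.ofReal (isoProfile μ (v n)).toReal) atTop
      (𝓝 (isoProfile μ W)) := by
    have h := (ENNReal.continuous_ofReal.tendsto _).comp
      (hcont.tendsto.comp (tendsto_nhdsWithin_iff.2 ⟨hv, hdom⟩))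
    rwa [ENNReal.ofReal_toReal hIW] at h
  rw [← hI.liminf_eq]
  exact liminf_le_liminf (hfin.mono fun n hn => ENNReal.ofReal_toReal_le.trans
    (isoProfile_le_Perim μ (hE n) (ENNReal.ofReal_toReal hn).symm))

theorem BVCompactness.exists_subseq_tendsto_symmDiff_inter_ball {μ : Measure X}
    (hH1 : BVCompactness μ) {E : ℕ → Set X} (hE : ∀ k, MeasurableSet (E k)) {v p : ℝ≥0∞}
    (hv : v ≠ ⊤) (hp : p ≠ ⊤) (hvol : Tendsto (fun k => μ (E k)) atTop (𝓝 v))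
    (hper : Tendsto (fun k => Perim μ (E k)) atTop (𝓝 p)) :
    ∃ φ : ℕ → ℕ, StrictMono φ ∧ (∀ j, μ (E (φ j)) ≠ ⊤ ∧ Perim μ (E (φ j)) ≠ ⊤) ∧
      ∃ F : Set X, MeasurableSet F ∧
        ∀ x, ∀ R > 0, Tendsto (fun j => μ (E (φ j) ∆ F ∩ ball x R)) atTop (𝓝 0) := by
  obtain ⟨N, hN⟩ := eventually_atTop.1
    ((hvol.eventually_lt_const (ENNReal.lt_add_right hv one_ne_zero)).and
      (hper.eventually_lt_const (ENNReal.lt_add_right hp one_ne_zero)))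
  have hbound : ∀ i, μ (E (i + N)) + Perim μ (E (i + N)) ≤ (v + 1) + (p + 1) := fun i =>
    add_le_add (hN _ (Nat.le_add_left N i)).1.le (hN _ (Nat.le_add_left N i)).2.le
  obtain ⟨φ, hφ, F, hF, hloc⟩ :=
    hH1 (fun i => E (i + N)) (fun i => hE _) ⟨_, by finiteness, hbound⟩
  refine ⟨fun j => φ j + N, fun a b hab => Nat.add_lt_add_right (hφ hab) N,
    fun j => ⟨((hN _ (Nat.le_add_left N _)).1.trans_le le_top).ne,
      ((hN _ (Nat.le_add_left N _)).2.trans_le le_top).ne⟩, F, hF, fun x R hR => ?_⟩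
  exact (tendstoL1On_indicator_iff μ (fun j => hE _) hF _).1 (hloc x R hR)

theorem isoProfile_add_isoProfileAtInfty_le [OpensMeasurableSpace X] {μ : Measure X}
    (hcut : CutProperty μ) (hIfin : ∀ v ∈ profileDomain μ, isoProfile μ v ≠ ⊤)
    (hIcont : ContinuousOn (fun v : ℝ => (isoProfile μ v).toReal) (profileDomain μ))
    {H : ℕ → Set X} (hH : ∀ n, MeasurableSet (H n)) (hHfin : ∀ n, μ (H n) ≠ ⊤)
    (hHP : ∀ n, Perim μ (H n) ≠ ⊤) {V : ℝ} {p : ℝ≥0∞}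
    (hvol : Tendsto (fun n => μ (H n)) atTop (𝓝 (ENNReal.ofReal V)))
    (hper : Tendsto (fun n => Perim μ (H n)) atTop (𝓝 p))
    {F : Set X} {W : ℝ} (hW : 0 ≤ W) (hWμ : ENNReal.ofReal W < μ univ)
    (hF : μ F = ENNReal.ofReal W) {o : X} {R : ℕ → ℝ} (hR : ∀ n, 0 < R n)
    (hR_top : Tendsto R atTop atTop)
    (hloc : Tendsto (fun n => μ (H n ∆ F ∩ ball o (2 * R n))) atTop (𝓝 0)) :
    isoProfile μ W + isoProfileAtInfty μ (V - W) ≤ p := by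
  choose r hr hcut_r using fun n =>
    hcut.exists_radius_Perim_add_Perim_le (hH n) (hHP n) (hHfin n) o (hR n)
  have hr_top : Tendsto r atTop atTop := tendsto_atTop_mono (fun n => (hr n).1.le) hR_top
  have herr : Tendsto (fun n => 2 * ENNReal.ofReal ((μ (H n)).toReal / R n)) atTop (𝓝 0) := by
    have h := ((ENNReal.tendsto_toReal ENNReal.ofReal_ne_top).comp hvol).div_atTop hR_top
    simpa using ENNReal.Tendsto.const_mul ((ENNReal.continuous_ofReal.tendsto 0).comp h)
      (.inr ENNReal.ofNat_ne_top)
  have hnear : Tendsto (fun n => μ (H n ∩ ball o (r n))) atTop (𝓝 (ENNReal.ofReal W)) := by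
    refine hF ▸ tendsto_measure_of_tendsto_measure_symmDiff
      (tendsto_of_tendsto_of_tendsto_of_le_of_le tendsto_const_nhds hloc (fun n => zero_le)
        fun n => ?_) (tendsto_measure_inter_ball hr_top F o)
    rw [← inter_symmDiff_distrib_right]
    exact measure_mono (inter_subset_inter_right _ (ball_subset_ball (hr n).2.le))
  have hfar : Tendsto (fun n => μ (H n \ ball o (r n))) atTop (𝓝 (ENNReal.ofReal (V - W))) := by
    rw [ENNReal.ofReal_sub _ hW, tendsto_congr fun n => measure_sdiff_ball_eq (r n)
      (ne_top_of_le_ne_top (hHfin n) (measure_mono inter_subset_left))]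
    exact ENNReal.Tendsto.sub hvol hnear (.inr ENNReal.ofReal_ne_top)
  have hnear_le : isoProfile μ W ≤ liminf (fun n => Perim μ (H n ∩ ball o (r n))) atTop := by
    rcases hW.eq_or_lt with rfl | hWpos
    · simp [isoProfile_zero]
    · have hWdom : W ∈ profileDomain μ := ⟨hWpos, hWμ⟩
      exact isoProfile_le_liminf_Perim hWdom (hIfin W hWdom) (hIcont W hWdom)
        (fun n => (hH n).inter measurableSet_ball) hnear
  have hfar_le : isoProfileAtInfty μ (V - W)
      ≤ liminf (fun n => Perim μ (H n \ ball o (r n))) atTop :=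
    iInf_le_of_le _ <| iInf_le_of_le (fun n => (hH n).diff measurableSet_ball) <|
      iInf_le_of_le hfar <| iInf_le _ fun x ρ _ =>
        eventually_sdiff_ball_inter_ball_eq_empty hr_top H o x ρ
  calc isoProfile μ W + isoProfileAtInfty μ (V - W)
      ≤ liminf (fun n => Perim μ (H n ∩ ball o (r n))) atTop
        + liminf (fun n => Perim μ (H n \ ball o (r n))) atTop := add_le_add hnear_le hfar_le
    _ ≤ liminf (fun n => Perim μ (H n ∩ ball o (r n)) + Perim μ (H n \ ball o (r n))) atTop :=
        ENNReal.le_liminf_add _ _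
    _ ≤ liminf (fun n => Perim μ (H n) + 2 * ENNReal.ofReal ((μ (H n)).toReal / R n)) atTop :=
        liminf_le_liminf (.of_forall hcut_r)
    _ = p := by simpa using (hper.add herr).liminf_eq

theorem strict_subadditivity_implies_L1_compactness_general
    {X : Type*} [MetricSpace X] [MeasurableSpace X] [BorelSpace X]
    (μ : Measure X)
    (hH1 : BVCompactness μ) (hH2 : CutProperty μ)
    (hIfin : ∀ v ∈ profileDomain μ, isoProfile μ v ≠ ⊤)
    (hIcont : ContinuousOn (fun v : ℝ => (isoProfile μ v).toReal) (profileDomain μ))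
    (V : ℝ) (hV : V ∈ profileDomain μ)
    (hstrict : ∀ V₁ V₂ : ℝ, 0 ≤ V₁ → 0 < V₂ → V₂ ≤ V → V₁ + V₂ = V →
      isoProfile μ V < isoProfile μ V₁ + isoProfileAtInfty μ V₂)
    (Ω : ℕ → Set X) (hΩmeas : ∀ k, MeasurableSet (Ω k))
    (hΩvol : Tendsto (fun k => μ (Ω k)) atTop (𝓝 (ENNReal.ofReal V)))
    (hΩmin : Tendsto (fun k => Perim μ (Ω k)) atTop (𝓝 (isoProfile μ V))) :
    ∃ φ : ℕ → ℕ, StrictMono φ ∧ ∃ Ωlim : Set X, MeasurableSet Ωlim ∧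
      μ Ωlim = ENNReal.ofReal V ∧
      TendstoL1On μ Set.univ (fun k => (Ω (φ k)).indicator 1) (Ωlim.indicator 1) := by
  obtain ⟨φ, hφ, hfin, F, hF, hloc⟩ := hH1.exists_subseq_tendsto_symmDiff_inter_ball hΩmeas
    ENNReal.ofReal_ne_top (hIfin V hV) hΩvol hΩmin
  have hvol := hΩvol.comp hφ.tendsto_atTop
  obtain ⟨o, -⟩ := nonempty_of_measure_ne_zero (ne_bot_of_gt hV.2)
  obtain hFV | hFV := (measure_le_of_tendsto_symmDiff_inter_ball hvol (hloc o)).lt_or_eq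
  · obtain ⟨ψ, hψ, hdiag⟩ := ENNReal.exists_strictMono_tendsto_diag fun n =>
      hloc o (2 * ((n : ℝ) + 1)) (by positivity)
    set W := (μ F).toReal
    have hW : μ F = ENNReal.ofReal W := (ENNReal.ofReal_toReal (hFV.trans_le le_top).ne).symm
    have hWV : W < V := ENNReal.toReal_lt_of_lt_ofReal hFV
    have hW0 : 0 ≤ W := ENNReal.toReal_nonneg
    have hsplit := isoProfile_add_isoProfileAtInfty_le hH2 hIfin hIcont (fun n => hΩmeas _)
      (fun n => (hfin _).1) (fun n => (hfin _).2) (hvol.comp hψ.tendsto_atTop)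
      ((hΩmin.comp hφ.tendsto_atTop).comp hψ.tendsto_atTop) hW0 (hW ▸ hFV.trans hV.2) hW
      (fun n => by positivity) (tendsto_atTop_add_const_right _ 1 tendsto_natCast_atTop_atTop)
      hdiag
    exact absurd hsplit (hstrict W (V - W) hW0 (by linarith) (by linarith) (by ring)).not_ge
  · refine ⟨φ, hφ, F, hF, hFV, (tendstoL1On_indicator_iff μ (fun j => hΩmeas _) hF _).2 ?_⟩
    simpa using tendsto_measure_symmDiff_of_tendsto_measure (hFV ▸ ENNReal.ofReal_ne_top)
      (fun j => (hfin j).1) (hFV ▸ hvol) (hloc o)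

/-- **Strict subadditivity against the profile at infinity implies L¹-compactness of
minimizing sequences.** Let `(X, d, μ)` be a noncompact metric measure space satisfying
(H1)–(H5), and assume the isoperimetric profile `I_X` is real-valued and continuous on
`(0, μ(X))`. Let `V ∈ (0, μ(X))` and suppose that `I_X(V) < I_X(V₁) + I^∞_X(V₂)` for all
`V₁, V₂ ≥ 0` with `V₁ + V₂ = V` and `V₂ ∈ (0, V]` (note `I_X(0) = 0` for the definition
used here). Then every sequence of Borel sets `Ω_k ⊆ X` with `lim_k μ(Ω_k) = V` and
`lim_k P(Ω_k) = I_X(V)` admits a subsequence `Ω_{k_j}` and a Borel set `Ω ⊆ X` with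
`μ(Ω) = V` such that `χ_{Ω_{k_j}} → χ_Ω` in `L¹(X, μ)`. -/
theorem strict_subadditivity_implies_L1_compactness
    {X : Type*} [MetricSpace X] [MeasurableSpace X] [BorelSpace X]
    [LocallyCompactSpace X] [TopologicalSpace.SeparableSpace X] [NoncompactSpace X]
    (μ : Measure X) (hfin : FiniteOnBounded μ) (hsupp : FullSupport μ)
    (hH1 : BVCompactness μ) (hH2 : CutProperty μ) (hH3 : SmallBallPerimeter μ)
    (hH4 : BallVolContinuous μ) (hH5 : UnifLocDoubling μ)
    (hIfin : ∀ v ∈ profileDomain μ, isoProfile μ v ≠ ⊤)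
    (hIcont : ContinuousOn (fun v : ℝ => (isoProfile μ v).toReal) (profileDomain μ))
    (V : ℝ) (hV : V ∈ profileDomain μ)
    (hstrict : ∀ V₁ V₂ : ℝ, 0 ≤ V₁ → 0 < V₂ → V₂ ≤ V → V₁ + V₂ = V →
      isoProfile μ V < isoProfile μ V₁ + isoProfileAtInfty μ V₂)
    (Ω : ℕ → Set X) (hΩmeas : ∀ k, MeasurableSet (Ω k))
    (hΩvol : Tendsto (fun k => μ (Ω k)) atTop (𝓝 (ENNReal.ofReal V)))
    (hΩmin : Tendsto (fun k => Perim μ (Ω k)) atTop (𝓝 (isoProfile μ V))) :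
    ∃ φ : ℕ → ℕ, StrictMono φ ∧ ∃ Ωlim : Set X, MeasurableSet Ωlim ∧
      μ Ωlim = ENNReal.ofReal V ∧
      TendstoL1On μ Set.univ (fun k => (Ω (φ k)).indicator 1) (Ωlim.indicator 1) :=
  strict_subadditivity_implies_L1_compactness_general μ hH1 hH2 hIfin hIcont V hV hstrict Ω hΩmeas
    hΩvol hΩmin

end
end

section
/- Equality of the two isoperimetric profiles at infinity: Let (X, d, μ) be a noncompact metric measure space satisfying the cut property. Then Ĩ^∞_X(V) = I^∞_X(V) for every V ∈ (0, μ(X)). -/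
open Filter MeasureTheory Metric Set Topology
open scoped ENNReal NNReal

noncomputable section

variable {X : Type*} [MetricSpace X] [MeasurableSpace X]

/-!
Given sets `E i` whose mass escapes every ball only volumewise, cut each one along a sphere
`∂B(o, r i)` with `r i → ∞`. The radius is chosen in a unit window in which `E i` has small
mass `m`: the monotone function `s ↦ μ(E i ∩ B(o, s))` then has derivative `≲ m` on most of
the window, so by the cut property the cut costs little perimeter, and it also removes little
volume. The cut sets leave every ball eventually, so they compete for `I^∞_X` with the same
limit volume and no larger liminf of perimeters.
-/

theorem Filter.exists_tendsto_atTop_diag {α : Type*} {l : Filter α} [l.IsCountablyGenerated]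
    {u : ℕ → ℕ → α} (hu : ∀ k, Tendsto (u k) atTop l) :
    ∃ φ : ℕ → ℕ, Tendsto φ atTop atTop ∧ Tendsto (fun i => u (φ i) i) atTop l := by
  obtain ⟨s, hs⟩ := l.exists_antitone_basis
  obtain ⟨N, hN, hNu⟩ := extraction_forall_of_eventually fun k =>
    eventually_forall_ge_atTop.2 ((hu k).eventually (hs.mem k))
  -- `φ i` is the last row whose threshold `N` has been passed at time `i`.
  set φ : ℕ → ℕ := fun i => Nat.findGreatest (fun k => N k ≤ i) i
  have hφ_ge : ∀ k i, N k ≤ i → k ≤ φ i := fun k i hi =>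
    Nat.le_findGreatest (hN.id_le k |>.trans hi) hi
  have hφ_spec : ∀ i, N 0 ≤ i → N (φ i) ≤ i := fun i hi =>
    Nat.findGreatest_spec (P := fun k => N k ≤ i) (Nat.zero_le i) hi
  refine ⟨φ, tendsto_atTop_atTop.2 fun k => ⟨N k, hφ_ge k⟩, hs.tendsto_right_iff.2 fun k _ => ?_⟩
  filter_upwards [eventually_ge_atTop (max (N 0) (N k))] with i hi using
    hs.antitone (hφ_ge k i (le_of_max_le_right hi)) (hNu (φ i) i (hφ_spec i (le_of_max_le_left hi)))

theorem exists_mem_Ioo_deriv_le_of_sub_lt {f : ℝ → ℝ} {a b c : ℝ}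
    (hf : MonotoneOn f (Icc a b)) (hab : a < b) (hc : f b - f a < c * (b - a))
    {Q : ℝ → Prop} (hQ : ∀ᵐ r ∂volume.restrict (Ioo a b), Q r) :
    ∃ r ∈ Ioo a b, Q r ∧ deriv f r ≤ c := by
  by_contra! hbig
  have hf' : MonotoneOn f (uIcc a b) := by rwa [uIcc_of_le hab.le]
  have hle : (fun _ => c) ≤ᵐ[volume.restrict (Icc a b)] deriv f := by
    rw [← Measure.restrict_congr_set Ioo_ae_eq_Icc]
    filter_upwards [hQ, ae_restrict_mem measurableSet_Ioo] with r hr hr' using (hbig r hr' hr).le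
  have hfab : f a ≤ f b := hf ⟨le_rfl, hab.le⟩ ⟨hab.le, le_rfl⟩ hab.le
  have hint := calc c * (b - a) = ∫ _ in a..b, c := by simp [mul_comm]
    _ ≤ ∫ r in a..b, deriv f r :=
      intervalIntegral.integral_mono_ae_restrict hab.le intervalIntegrable_const
        hf'.intervalIntegrable_deriv hle
    _ ≤ f b - f a :=
      (hf'.intervalIntegral_deriv_mem_uIcc).2.trans (max_le (by linarith) le_rfl)
  linarith

theorem perim_mono (μ : Measure X) (E : Set X) {A B : Set X} (hAB : A ⊆ B) :
    perim μ E A ≤ perim μ E B := by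
  refine le_iInf fun u => le_iInf fun hlip => le_iInf fun hconv => ?_
  refine iInf_le_of_le u (iInf_le_of_le ?_ (iInf_le_of_le ?_ ?_))
  · intro i x hx
    obtain ⟨K, t, ht, hK⟩ := hlip i x (hAB hx)
    exact ⟨K, t, nhdsWithin_mono x hAB ht, hK⟩
  · exact fun K hK hKc => hconv K (hK.trans hAB) hKc
  · exact liminf_le_liminf <| .of_forall fun i =>
      lintegral_mono' (Measure.restrict_mono hAB le_rfl) le_rfl

theorem perim_le_Perim (μ : Measure X) (E A : Set X) : perim μ E A ≤ Perim μ E :=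
  perim_mono μ E (subset_univ A)

theorem tendsto_measure_diff_of_tendsto_measure_inter {α : Type*} [MeasurableSpace α]
    {μ : Measure α} {E B : ℕ → Set α} {v : ℝ≥0∞} (hE : Tendsto (fun i => μ (E i)) atTop (𝓝 v))
    (hEB : Tendsto (fun i => μ (E i ∩ B i)) atTop (𝓝 0)) :
    Tendsto (fun i => μ (E i \ B i)) atTop (𝓝 v) := by
  have hlower : Tendsto (fun i => μ (E i) - μ (E i ∩ B i)) atTop (𝓝 v) := by
    simpa using ENNReal.Tendsto.sub hE hEB (.inr ENNReal.zero_ne_top)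
  refine tendsto_of_tendsto_of_tendsto_of_le_of_le hlower hE (fun i => ?_)
    (fun i => measure_mono sdiff_subset)
  simpa only [sdiff_self_inter] using le_measure_sdiff (μ := μ) (s₁ := E i) (s₂ := E i ∩ B i)

theorem CutProperty.exists_mem_Ioo_perim_diff_ball_le {μ : Measure X} (hcut : CutProperty μ)
    {E : Set X} (hE : MeasurableSet E) (o : X) {a b c : ℝ} (ha : 0 ≤ a) (hab : a < b)
    (hc : μ (E ∩ ball o b) < ENNReal.ofReal (c * (b - a))) :
    ∃ r ∈ Ioo a b, Perim μ (E \ ball o r) ≤ Perim μ E + ENNReal.ofReal c := by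
  by_cases hP : Perim μ E = ⊤
  · exact ⟨(a + b) / 2, ⟨by linarith, by linarith⟩, by simp [hP]⟩
  set m : ℝ → ℝ := fun s => (μ (E ∩ ball o s)).toReal
  have hm : MonotoneOn m (Icc a b) := fun _ _ t ht hst =>
    ENNReal.toReal_mono (measure_mono (inter_subset_inter_right _ (ball_subset_ball ht.2))
      |>.trans_lt hc).ne_top (measure_mono (inter_subset_inter_right _ (ball_subset_ball hst)))
  have hslope : m b - m a < c * (b - a) := by
    linarith [ENNReal.toReal_lt_of_lt_ofReal hc, ENNReal.toReal_nonneg (a := μ (E ∩ ball o a))]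
  obtain ⟨r, hr, hcut_r, hderiv⟩ := exists_mem_Ioo_deriv_le_of_sub_lt hm hab hslope
    (ae_restrict_of_ae_restrict_of_subset (fun r hr => lt_of_le_of_lt ha hr.1) (hcut E hE hP o))
  refine ⟨r, hr, ?_⟩
  calc Perim μ (E \ ball o r)
      ≤ perim μ E (closure (ball o r))ᶜ + ENNReal.ofReal (deriv m r) := hcut_r.2
    _ ≤ Perim μ E + ENNReal.ofReal c :=
      add_le_add (perim_le_Perim μ E _) (ENNReal.ofReal_le_ofReal hderiv)

theorem CutProperty.exists_tendsto_radii {μ : Measure X} (hcut : CutProperty μ)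
    (hfin : FiniteOnBounded μ) {E : ℕ → Set X} (hE : ∀ i, MeasurableSet (E i)) (o : X)
    (hloc : ∀ R : ℝ, 0 < R → Tendsto (fun i => μ (E i ∩ ball o R)) atTop (𝓝 0)) :
    ∃ r : ℕ → ℝ, Tendsto r atTop atTop ∧
      Tendsto (fun i => μ (E i ∩ ball o (r i))) atTop (𝓝 0) ∧
      liminf (fun i => Perim μ (E i \ ball o (r i))) atTop ≤
        liminf (fun i => Perim μ (E i)) atTop := by
  obtain ⟨φ, hφ, hmass⟩ := exists_tendsto_atTop_diag (u := fun k i => μ (E i ∩ ball o (k + 2)))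
    fun k => hloc _ (by positivity)
  set mass : ℕ → ℝ≥0∞ := fun i => μ (E i ∩ ball o (φ i + 2))
  have hmass_ne_top : ∀ i, mass i ≠ ⊤ := fun i =>
    (measure_mono inter_subset_right |>.trans_lt (hfin _ isBounded_ball)).ne
  -- `1 / (i + 1)` makes the slope budget strictly exceed the mass, as the cut lemma requires
  set c : ℕ → ℝ := fun i => (mass i).toReal + 1 / (i + 1)
  have hc : Tendsto (fun i => ENNReal.ofReal (c i)) atTop (𝓝 0) := by
    rw [← ENNReal.ofReal_zero, ← add_zero (0 : ℝ)]
    refine ENNReal.tendsto_ofReal (.add ?_ tendsto_one_div_add_atTop_nhds_zero_nat)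
    simpa only [ENNReal.toReal_zero, Function.comp_def] using
      (ENNReal.tendsto_toReal ENNReal.zero_ne_top).comp hmass
  have hcut_i : ∀ i, ∃ r ∈ Ioo ((φ i : ℝ) + 1) (φ i + 2),
      Perim μ (E i \ ball o r) ≤ Perim μ (E i) + ENNReal.ofReal (c i) := fun i =>
    hcut.exists_mem_Ioo_perim_diff_ball_le (hE i) o (by positivity) (by linarith) (by
      change mass i < _
      rw [show (φ i : ℝ) + 2 - (φ i + 1) = 1 by ring, mul_one,
        ← ENNReal.ofReal_toReal (hmass_ne_top i)]
      exact (ENNReal.ofReal_lt_ofReal_iff (by positivity)).2 (by simp [c]; positivity))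
  choose r hr hperim using hcut_i
  refine ⟨r, ?_, ?_, ?_⟩
  · exact tendsto_atTop_mono (fun i => (lt_add_one _).trans (hr i).1 |>.le)
      (tendsto_natCast_atTop_atTop.comp hφ)
  · exact tendsto_of_tendsto_of_tendsto_of_le_of_le tendsto_const_nhds hmass (fun _ => bot_le)
      fun i => measure_mono (inter_subset_inter_right _ (ball_subset_ball (hr i).2.le))
  · calc liminf (fun i => Perim μ (E i \ ball o (r i))) atTop
        ≤ liminf (fun i => Perim μ (E i) + ENNReal.ofReal (c i)) atTop :=
          liminf_le_liminf (.of_forall hperim)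
      _ = liminf (fun i => Perim μ (E i)) atTop :=
          ENNReal.liminf_add_of_right_tendsto_zero hc _

theorem isoProfileAtInftyVol_le_isoProfileAtInfty (μ : Measure X) (V : ℝ) :
    isoProfileAtInftyVol μ V ≤ isoProfileAtInfty μ V := by
  refine le_iInf fun E => le_iInf fun hE => le_iInf fun hvol => le_iInf fun hempty => ?_
  refine iInf_le_of_le E (iInf_le_of_le hE (iInf_le_of_le hvol (iInf_le_of_le ?_ le_rfl)))
  intro x t ht
  refine tendsto_const_nhds.congr' ?_
  filter_upwards [hempty x t ht] with i hi
  simp [hi]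

theorem isoProfileAtInfty_le_isoProfileAtInftyVol [OpensMeasurableSpace X] [Nonempty X]
    {μ : Measure X} (hfin : FiniteOnBounded μ) (hcut : CutProperty μ) (V : ℝ) :
    isoProfileAtInfty μ V ≤ isoProfileAtInftyVol μ V := by
  refine le_iInf fun E => le_iInf fun hE => le_iInf fun hvol => le_iInf fun hloc => ?_
  obtain ⟨o⟩ := ‹Nonempty X›
  obtain ⟨r, hr, hcut_mass, hcut_perim⟩ := hcut.exists_tendsto_radii hfin hE o (hloc o)
  refine iInf_le_of_le (fun i => E i \ ball o (r i)) (iInf_le_of_le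
    (fun i => (hE i).diff measurableSet_ball) (iInf_le_of_le
      (tendsto_measure_diff_of_tendsto_measure_inter hvol hcut_mass)
      (iInf_le_of_le ?_ hcut_perim)))
  intro x t _
  filter_upwards [hr.eventually_ge_atTop (t + dist x o)] with i hi
  exact eq_empty_of_forall_notMem fun y hy => hy.1.2 (ball_subset_ball' hi hy.2)

theorem isoProfileAtInftyVol_eq_isoProfileAtInfty_general
    {X : Type*} [MetricSpace X] [MeasurableSpace X] [BorelSpace X]
    [NoncompactSpace X]
    (μ : Measure X) (hfin : FiniteOnBounded μ)
    (hcut : CutProperty μ)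
    (V : ℝ) :
    isoProfileAtInftyVol μ V = isoProfileAtInfty μ V := by
  have : Nonempty X := by
    by_contra hX
    rw [not_nonempty_iff] at hX
    exact not_compactSpace_iff.2 ‹_› inferInstance
  exact le_antisymm (isoProfileAtInftyVol_le_isoProfileAtInfty μ V)
    (isoProfileAtInfty_le_isoProfileAtInftyVol hfin hcut V)

/-- **Equality of the two isoperimetric profiles at infinity.**
Let `(X, d, μ)` be a noncompact metric measure space satisfying the cut property.
Then `Ĩ^∞_X(V) = I^∞_X(V)` for every `V ∈ (0, μ(X))`. -/
theorem isoProfileAtInftyVol_eq_isoProfileAtInfty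
    {X : Type*} [MetricSpace X] [MeasurableSpace X] [BorelSpace X]
    [LocallyCompactSpace X] [TopologicalSpace.SeparableSpace X] [NoncompactSpace X]
    (μ : Measure X) (hfin : FiniteOnBounded μ) (hsupp : FullSupport μ)
    (hcut : CutProperty μ)
    (V : ℝ) (hV : V ∈ profileDomain μ) :
    isoProfileAtInftyVol μ V = isoProfileAtInfty μ V :=
  isoProfileAtInftyVol_eq_isoProfileAtInfty_general μ hfin hcut V

end
end

section
/- The isoperimetric profile is bounded above by the profiles at infinity: Let (X, d, μ) be a noncompact metric measure space and assume the isoperimetric profile I_X is lower semicontinuous on (0, μ(X)). Then for every V ∈ (0, μ(X)) one has I_X(V) ≤ Ĩ^∞_X(V) ≤ I^∞_X(V). -/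
open Filter MeasureTheory Metric Set Topology
open scoped ENNReal NNReal

noncomputable section

variable {X : Type*} [MetricSpace X] [MeasurableSpace X]

/-!
Along any sequence `E i` with `μ (E i) → V`, the volumes eventually lie in `(0, μ(X))`, so lower
semicontinuity of `I_X` gives `I_X(V) ≤ liminf I_X(μ(E i)) ≤ liminf P(E i)`. The second inequality
holds because a sequence that eventually leaves every ball in particular loses the volume in every ball.
-/

theorem isoProfile_toReal_le_Perim {μ : Measure X} {E : Set X} (hE : MeasurableSet E)
    (hμE : μ E ≠ ⊤) : isoProfile μ (μ E).toReal ≤ Perim μ E :=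
  iInf₂_le_of_le E hE (iInf_le_of_le (ENNReal.ofReal_toReal hμE).symm le_rfl)

theorem tendsto_toReal_measure_nhdsWithin_profileDomain {Ω ι : Type*} [MeasurableSpace Ω]
    {l : Filter ι} {μ : Measure Ω} {E : ι → Set Ω} {V : ℝ} (hV : V ∈ profileDomain μ)
    (hE : Tendsto (fun i => μ (E i)) l (𝓝 (ENNReal.ofReal V))) :
    Tendsto (fun i => (μ (E i)).toReal) l (𝓝[profileDomain μ] V) := by
  have hE_real : Tendsto (fun i => (μ (E i)).toReal) l (𝓝 V) := by
    simpa only [Function.comp_def, ENNReal.toReal_ofReal hV.1.le] using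
      (ENNReal.tendsto_toReal ENNReal.ofReal_ne_top).comp hE
  refine tendsto_nhdsWithin_iff.mpr ⟨hE_real, ?_⟩
  filter_upwards [hE_real.eventually_const_lt hV.1, hE.eventually_lt_const hV.2,
    hE.eventually_lt_const ENNReal.ofReal_lt_top] with i hpos hlt hfin
  exact ⟨hpos, by rwa [ENNReal.ofReal_toReal hfin.ne]⟩

theorem isoProfile_le_liminf_Perim_s6 {ι : Type*} {l : Filter ι} {μ : Measure X} {V : ℝ}
    (hlsc : LowerSemicontinuousWithinAt (isoProfile μ) (profileDomain μ) V)
    (hV : V ∈ profileDomain μ) {E : ι → Set X} (hE : ∀ i, MeasurableSet (E i))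
    (hμE : Tendsto (fun i => μ (E i)) l (𝓝 (ENNReal.ofReal V))) :
    isoProfile μ V ≤ liminf (fun i => Perim μ (E i)) l := by
  have hvol := tendsto_toReal_measure_nhdsWithin_profileDomain hV hμE
  have hfin : ∀ᶠ i in l, μ (E i) ≠ ⊤ :=
    (hμE.eventually_lt_const ENNReal.ofReal_lt_top).mono fun _ h => h.ne
  calc isoProfile μ V ≤ liminf (isoProfile μ) (𝓝[profileDomain μ] V) := hlsc.le_liminf
    _ ≤ liminf (fun i => isoProfile μ (μ (E i)).toReal) l := hvol.liminf_le_liminf_comp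
    _ ≤ liminf (fun i => Perim μ (E i)) l :=
      liminf_le_liminf (hfin.mono fun i h => isoProfile_toReal_le_Perim (hE i) h)

theorem isoProfile_le_isoProfileAtInftyVol {μ : Measure X} {V : ℝ}
    (hlsc : LowerSemicontinuousWithinAt (isoProfile μ) (profileDomain μ) V)
    (hV : V ∈ profileDomain μ) : isoProfile μ V ≤ isoProfileAtInftyVol μ V :=
  le_iInf fun _ => le_iInf fun hE => le_iInf fun hμE => le_iInf fun _ =>
    isoProfile_le_liminf_Perim_s6 hlsc hV hE hμE

theorem isoProfile_le_isoProfileAtInfty_general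
    {X : Type*} [MetricSpace X] [MeasurableSpace X]
    (μ : Measure X)
    (hlsc : LowerSemicontinuousOn (fun V : ℝ => isoProfile μ V) (profileDomain μ))
    (V : ℝ) (hV : V ∈ profileDomain μ) :
    isoProfile μ V ≤ isoProfileAtInftyVol μ V ∧
      isoProfileAtInftyVol μ V ≤ isoProfileAtInfty μ V :=
  ⟨isoProfile_le_isoProfileAtInftyVol (hlsc V hV) hV,
    isoProfileAtInftyVol_le_isoProfileAtInfty μ V⟩

/-- **The isoperimetric profile is bounded above by the profiles at infinity.**
Let `(X, d, μ)` be a noncompact metric measure space and assume the isoperimetric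
profile `I_X` is lower semicontinuous on `(0, μ(X))`. Then for every `V ∈ (0, μ(X))`
one has `I_X(V) ≤ Ĩ^∞_X(V) ≤ I^∞_X(V)`. -/
theorem isoProfile_le_isoProfileAtInfty
    {X : Type*} [MetricSpace X] [MeasurableSpace X] [BorelSpace X]
    [LocallyCompactSpace X] [TopologicalSpace.SeparableSpace X] [NoncompactSpace X]
    (μ : Measure X) (hfin : FiniteOnBounded μ) (hsupp : FullSupport μ)
    (hlsc : LowerSemicontinuousOn (fun V : ℝ => isoProfile μ V) (profileDomain μ))
    (V : ℝ) (hV : V ∈ profileDomain μ) :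
    isoProfile μ V ≤ isoProfileAtInftyVol μ V ∧
      isoProfileAtInftyVol μ V ≤ isoProfileAtInfty μ V :=
  isoProfile_le_isoProfileAtInfty_general μ hlsc V hV

end
end

section
/- Local mass lower bound (concentration of volume in a unit ball): Let (X, d, μ) be a metric measure space such that: μ is uniformly locally doubling; μ(B_1(x)) ≥ v_0 > 0 for every x ∈ X; for some N > 1 and C_RI > 0 the relative isoperimetric inequality min{ μ(B_1(x) ∩ E), μ(B_1(x) ∖ E) }^{1 − 1/N} ≤ C_RI · P(E, B_1(x)) holds for every x ∈ X and every set of finite perimeter E ⊆ X; and for every set of finite perimeter E the set function A ↦ P(E, A), defined on open sets, is the restriction of a Borel measure on X. Then there exists a constant C_M > 0, depending only on N, C_RI, v_0 and the doubling constants of μ, such that for every set of finite perimeter E ⊆ X with 0 < μ(E) < ∞ there exists x_0 ∈ X with μ(E ∩ B_1(x_0)) ≥ min{ C_M · (μ(E)/P(E))^N, v_0/2 } (with the convention t/0 := +∞). -/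
open Filter MeasureTheory Metric Set Topology
open scoped ENNReal NNReal

noncomputable section

variable {X : Type*} [MetricSpace X] [MeasurableSpace X]

/-!
Cover `X` by the unit balls centred at a maximal `1/2`-separated set `S`. By doubling, every point
lies in a bounded number `C` of these balls, so summing the relative isoperimetric inequality over
the cover costs only a factor `C` on the perimeter measure. If no ball carries mass `v₀/2`, the
minimum in the inequality is always `μ(E ∩ B)`, and bounding `μ(E ∩ B)^(1/N)` by
`m = sup_s μ(E ∩ B₁(s))` gives `μ(E) ≤ m^(1/N) · C_RI · C · P(E)`, i.e. `m ≳ (μ(E)/P(E))^N`.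
-/

theorem ENNReal.le_rpow_one_div_mul_rpow_one_sub {a m : ℝ≥0∞} {N : ℝ} (hN : 0 ≤ N)
    (ha : a ≠ ⊤) (ham : a ≤ m) : a ≤ m ^ (1 / N) * a ^ (1 - 1 / N) := by
  rcases eq_or_ne a 0 with rfl | ha₀
  · exact zero_le
  calc a = a ^ (1 / N) * a ^ (1 - 1 / N) := by
        rw [← ENNReal.rpow_add _ _ ha₀ ha, add_sub_cancel, ENNReal.rpow_one]
    _ ≤ m ^ (1 / N) * a ^ (1 - 1 / N) := by gcongr

theorem ENNReal.rpow_div_le_mul_of_le_rpow_one_div_mul {a b m P : ℝ≥0∞} {N : ℝ} (hN : 0 < N)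
    (h : a ≤ m ^ (1 / N) * b * P) : (a / P) ^ N ≤ b ^ N * m :=
  calc (a / P) ^ N ≤ (m ^ (1 / N) * b) ^ N :=
        ENNReal.rpow_le_rpow (ENNReal.div_le_of_le_mul h) hN.le
    _ = b ^ N * m := by
        rw [ENNReal.mul_rpow_of_nonneg _ _ hN.le, one_div, ENNReal.rpow_inv_rpow hN.ne', mul_comm]

theorem ENNReal.inv_two_mul_mul_mul_le_half {a b : ℝ≥0∞} (hb : b ≠ ⊤) :
    (2 * b)⁻¹ * (b * a) ≤ a / 2 := by
  rcases eq_or_ne b 0 with rfl | hb₀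
  · simp
  rw [ENNReal.mul_inv (Or.inl two_ne_zero) (Or.inl ENNReal.ofNat_ne_top), mul_assoc,
    ← mul_assoc b⁻¹, ENNReal.inv_mul_cancel hb₀ hb, one_mul, ENNReal.div_eq_inv_mul]

theorem ENNReal.inv_two_mul_rpow_mul_div_rpow_lt {a b m P : ℝ≥0∞} {N : ℝ} (hN : 0 < N)
    (hb : b ^ N ≠ ⊤) (ha : a ≠ 0) (hm : m ≠ ⊤) (h : a ≤ m ^ (1 / N) * b * P) :
    (2 * b ^ N)⁻¹ * (a / P) ^ N < m := by
  have hm₀ : m ≠ 0 := by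
    rintro rfl
    rw [ENNReal.zero_rpow_of_pos (one_div_pos.2 hN), zero_mul, zero_mul] at h
    exact ha (le_zero_iff.1 h)
  calc (2 * b ^ N)⁻¹ * (a / P) ^ N ≤ (2 * b ^ N)⁻¹ * (b ^ N * m) := by
        gcongr; exact ENNReal.rpow_div_le_mul_of_le_rpow_one_div_mul hN h
    _ ≤ m / 2 := ENNReal.inv_two_mul_mul_mul_le_half hb
    _ < m := ENNReal.half_lt_self hm₀ hm

section MeasureTheory

variable {α ι : Type*} [MeasurableSpace α] [Countable ι]

theorem measure_le_tsum_inter_of_iUnion_eq_univ (μ : Measure α) {A : ι → Set α}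
    (hA : ⋃ i, A i = univ) (E : Set α) : μ E ≤ ∑' i, μ (E ∩ A i) :=
  calc μ E = μ (⋃ i, E ∩ A i) := by rw [← inter_iUnion, hA, inter_univ]
    _ ≤ ∑' i, μ (E ∩ A i) := measure_iUnion_le _

theorem tsum_measure_le_mul_measure_univ_of_tsum_indicator_le {A : ι → Set α}
    (hA : ∀ i, MeasurableSet (A i)) {C : ℝ≥0∞} (h : ∀ y, ∑' i, (A i).indicator 1 y ≤ C)
    (ν : Measure α) : ∑' i, ν (A i) ≤ C * ν univ :=
  calc ∑' i, ν (A i) = ∑' i, ∫⁻ y, (A i).indicator 1 y ∂ν := by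
        simp only [lintegral_indicator_one (hA _)]
    _ = ∫⁻ y, ∑' i, (A i).indicator 1 y ∂ν :=
        (lintegral_tsum fun i => (measurable_one.indicator (hA i)).aemeasurable).symm
    _ ≤ ∫⁻ _, C ∂ν := lintegral_mono h
    _ = C * ν univ := lintegral_const C

theorem measure_le_mul_of_forall_measure_inter_le {A : ι → Set α} (hA : ⋃ i, A i = univ)
    {μ ν : Measure α} {E : Set α} {c C : ℝ≥0∞} (hlocal : ∀ i, μ (E ∩ A i) ≤ c * ν (A i))
    (hoverlap : ∑' i, ν (A i) ≤ C * ν univ) : μ E ≤ c * C * ν univ :=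
  calc μ E ≤ ∑' i, μ (E ∩ A i) := measure_le_tsum_inter_of_iUnion_eq_univ μ hA E
    _ ≤ ∑' i, c * ν (A i) := ENNReal.tsum_le_tsum hlocal
    _ = c * ∑' i, ν (A i) := ENNReal.tsum_mul_left
    _ ≤ c * C * ν univ := by rw [mul_assoc]; gcongr

theorem measure_inter_le_measure_diff {μ : Measure α} {E B : Set α} {v : ℝ≥0∞}
    (hE : MeasurableSet E) (hB : v ≤ μ B) (hsmall : μ (B ∩ E) < v / 2) :
    μ (B ∩ E) ≤ μ (B \ E) := by
  by_contra! hlt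
  have := ENNReal.add_lt_add hsmall (hlt.trans hsmall)
  rw [measure_inter_add_sdiff B hE, ENNReal.add_halves] at this
  exact this.not_ge hB

theorem measure_inter_le_rpow_mul_of_min_rpow_le {μ : Measure α} {E B : Set α} {v m P : ℝ≥0∞}
    {N : ℝ} (hN : 0 ≤ N) (hE : MeasurableSet E) (hB : v ≤ μ B) (hsmall : μ (E ∩ B) < v / 2)
    (hEB : μ (E ∩ B) ≠ ⊤) (hm : μ (E ∩ B) ≤ m)
    (hiso : min (μ (B ∩ E)) (μ (B \ E)) ^ (1 - 1 / N) ≤ P) : μ (E ∩ B) ≤ m ^ (1 / N) * P := by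
  rw [inter_comm] at hsmall hEB hm ⊢
  rw [min_eq_left (measure_inter_le_measure_diff hE hB hsmall)] at hiso
  exact (ENNReal.le_rpow_one_div_mul_rpow_one_sub hN hEB hm).trans (by gcongr)

end MeasureTheory

theorem exists_pairwiseDisjoint_ball_iUnion_ball_eq_univ {Y : Type*} [MetricSpace Y] {r : ℝ}
    (hr : 0 < r) :
    ∃ S : Set Y, S.PairwiseDisjoint (ball · (r / 4)) ∧ ⋃ s : S, ball (s : Y) r = univ := by
  obtain ⟨S, hS⟩ := zorn_subset {S : Set Y | IsSeparated (r / 2).toNNReal S} fun c hc hchain =>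
    ⟨⋃₀ c, (pairwise_sUnion hchain.directedOn).2 hc, fun _ => subset_sUnion_of_mem⟩
  have hcover := IsCover.of_maximal_isSeparated (s := univ) (by simpa using hS)
  refine ⟨S, fun a ha b hb hab => ball_disjoint_ball ?_, eq_univ_of_forall fun x => ?_⟩
  · have : ENNReal.ofReal (r / 2) < edist a b := hS.prop ha hb hab
    rw [← not_le, edist_le_ofReal (by positivity), not_le] at this
    linarith
  · obtain ⟨s, hs, hxs⟩ := hcover (mem_univ x)
    have : edist x s ≤ ENNReal.ofReal (r / 2) := hxs
    rw [edist_le_ofReal (by positivity)] at this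
    exact mem_iUnion.2 ⟨⟨s, hs⟩, mem_ball.2 (by linarith)⟩

theorem UnifLocDoubling.exists_measure_ball_two_pow_mul_le {μ : Measure X}
    (h : UnifLocDoubling μ) (k : ℕ) {r : ℝ} (hr : 0 < r) :
    ∃ C : ℝ≥0∞, C ≠ ⊤ ∧ ∀ x, μ (ball x (2 ^ k * r)) ≤ C * μ (ball x r) := by
  induction k with
  | zero => exact ⟨1, ENNReal.one_ne_top, fun x => by simp⟩
  | succ k ih =>
    obtain ⟨C, hC, hCk⟩ := ih
    obtain ⟨D, hD, hDk⟩ := h (2 ^ k * r) (by positivity)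
    refine ⟨D * C, ENNReal.mul_ne_top hD hC, fun x => ?_⟩
    calc μ (ball x (2 ^ (k + 1) * r)) = μ (ball x (2 * (2 ^ k * r))) := by ring_nf
      _ ≤ D * μ (ball x (2 ^ k * r)) := hDk x _ (by positivity) le_rfl
      _ ≤ D * (C * μ (ball x r)) := by gcongr; exact hCk x
      _ = D * C * μ (ball x r) := (mul_assoc _ _ _).symm

theorem FiniteOnBounded.sigmaFinite [Nonempty X] {μ : Measure X}
    (h : FiniteOnBounded μ) : SigmaFinite μ := by
  obtain ⟨x⟩ := ‹Nonempty X›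
  refine Measure.sigmaFinite_of_countable (S := range fun n : ℕ => ball x n) (countable_range _)
    ?_ (by rw [sUnion_range, iUnion_ball_nat])
  rintro _ ⟨n, rfl⟩
  exact h _ isBounded_ball

section OpensMeasurable

variable [OpensMeasurableSpace X] {μ : Measure X}

theorem Set.PairwiseDisjoint.countable_of_ball (hfin : FiniteOnBounded μ)
    (hsupp : FullSupport μ) {S : Set X} {ρ : ℝ} (hρ : 0 < ρ)
    (hS : S.PairwiseDisjoint (ball · ρ)) : S.Countable := by
  rcases S.eq_empty_or_nonempty with rfl | ⟨x, -⟩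
  · exact countable_empty
  have : Nonempty X := ⟨x⟩
  have := hfin.sigmaFinite
  have := Measure.countable_meas_pos_of_disjoint_iUnion (μ := μ)
    (As := fun s : S => ball (s : X) ρ) (fun _ => measurableSet_ball)
    fun a b hab => hS a.2 b.2 (Subtype.coe_injective.ne hab)
  simp only [hsupp _ _ hρ, ofPred_true, countable_univ_iff] at this
  exact countable_coe_iff.1 this

theorem tsum_indicator_ball_le (hfin : FiniteOnBounded μ) (hsupp : FullSupport μ) {S : Set X}
    (hS : S.Countable) {r : ℝ} (hr : 0 < r) (hdisj : S.PairwiseDisjoint (ball · (r / 4)))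
    {C : ℝ≥0∞} (hC : ∀ x, μ (ball x (4 * r)) ≤ C * μ (ball x (r / 4))) (y : X) :
    ∑' s : S, (ball (s : X) r).indicator 1 y ≤ C := by
  have : Countable S := hS.to_subtype
  set B := ball y (r + r / 4)
  have hterm : ∀ s : S,
      (ball (s : X) r).indicator 1 y * μ B ≤ C * μ (ball (s : X) (r / 4) ∩ B) := by
    intro s
    by_cases hys : y ∈ ball (s : X) r
    · rw [mem_ball] at hys
      have hsB : ball (s : X) (r / 4) ⊆ B := ball_subset_ball' (by rw [dist_comm]; linarith)
      have hBs : B ⊆ ball (s : X) (4 * r) := ball_subset_ball' (by linarith)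
      rw [indicator_of_mem (mem_ball.2 hys), Pi.one_apply, one_mul, inter_eq_left.2 hsB]
      exact (measure_mono hBs).trans (hC s)
    · simp [hys]
  rw [← ENNReal.mul_le_mul_iff_left (c := μ B) (hsupp y _ (by positivity)).ne'
    (hfin _ isBounded_ball).ne]
  calc (∑' s : S, (ball (s : X) r).indicator 1 y) * μ B
      = ∑' s : S, (ball (s : X) r).indicator 1 y * μ B := ENNReal.tsum_mul_right.symm
    _ ≤ ∑' s : S, C * μ (ball (s : X) (r / 4) ∩ B) := ENNReal.tsum_le_tsum hterm
    _ = C * μ (⋃ s : S, ball (s : X) (r / 4) ∩ B) := by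
        rw [ENNReal.tsum_mul_left, measure_iUnion
          (fun a b hab => (hdisj a.2 b.2 (Subtype.coe_injective.ne hab)).mono inter_subset_left
            inter_subset_left) fun _ => measurableSet_ball.inter measurableSet_ball]
    _ ≤ C * μ B := by gcongr; exact iUnion_subset fun _ => inter_subset_right

theorem exists_countable_ball_cover_tsum_measure_le (hfin : FiniteOnBounded μ)
    (hsupp : FullSupport μ) {r : ℝ} (hr : 0 < r) {C : ℝ≥0∞}
    (hC : ∀ x, μ (ball x (4 * r)) ≤ C * μ (ball x (r / 4))) :
    ∃ S : Set X, S.Countable ∧ ⋃ s : S, ball (s : X) r = univ ∧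
      ∀ ν : Measure X, ∑' s : S, ν (ball s r) ≤ C * ν univ := by
  obtain ⟨S, hdisj, hcover⟩ := exists_pairwiseDisjoint_ball_iUnion_ball_eq_univ (Y := X) hr
  have hS := hdisj.countable_of_ball hfin hsupp (by positivity)
  have : Countable S := hS.to_subtype
  exact ⟨S, hS, hcover, tsum_measure_le_mul_measure_univ_of_tsum_indicator_le
    (fun _ => measurableSet_ball) (tsum_indicator_ball_le hfin hsupp hS hr hdisj hC)⟩

end OpensMeasurable

theorem local_mass_lower_bound_general
    {X : Type*} [MetricSpace X] [MeasurableSpace X] [BorelSpace X]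
    (μ : Measure X) (hfin : FiniteOnBounded μ) (hsupp : FullSupport μ)
    (hdoub : UnifLocDoubling μ)
    (v₀ : ℝ≥0∞) (hball : ∀ x : X, v₀ ≤ μ (ball x 1))
    (N : ℝ) (hN : 1 < N) (CRI : ℝ≥0∞) (hCRI' : CRI ≠ ⊤)
    (hrelisop : ∀ (x : X) (E : Set X), MeasurableSet E →
      min (μ (ball x 1 ∩ E)) (μ (ball x 1 \ E)) ^ (1 - 1/N) ≤
        CRI * perim μ E (ball x 1))
    (hperimMeasure : ∀ E : Set X, MeasurableSet E →
      ∃ ν : Measure X, ∀ A : Set X, IsOpen A → ν A = perim μ E A) :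
    ∃ CM : ℝ≥0∞, 0 < CM ∧
      ∀ E : Set X, MeasurableSet E → Perim μ E ≠ ⊤ → 0 < μ E → μ E ≠ ⊤ →
        ∃ x₀ : X, min (CM * (μ E / Perim μ E) ^ N) (v₀ / 2) ≤ μ (E ∩ ball x₀ 1) := by
  have hN₀ : 0 < N := by linarith
  obtain ⟨C, hCtop, hC⟩ := hdoub.exists_measure_ball_two_pow_mul_le 4 (r := 1 / 4) (by norm_num)
  have hDN : (CRI * C) ^ N ≠ ⊤ :=
    ENNReal.rpow_ne_top_of_nonneg hN₀.le (ENNReal.mul_ne_top hCRI' hCtop)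
  refine ⟨(2 * (CRI * C) ^ N)⁻¹, ENNReal.inv_pos.2 (ENNReal.mul_ne_top ENNReal.ofNat_ne_top hDN),
    fun E hE _ hEpos hEtop => ?_⟩
  by_cases hlarge : ∃ x, v₀ / 2 ≤ μ (E ∩ ball x 1)
  · obtain ⟨x, hx⟩ := hlarge
    exact ⟨x, (min_le_right _ _).trans hx⟩
  push Not at hlarge
  obtain ⟨S, hS, hcover, hoverlap⟩ := exists_countable_ball_cover_tsum_measure_le hfin hsupp
    one_pos (C := C) (by norm_num at hC ⊢; exact hC)
  have : Countable S := hS.to_subtype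
  obtain ⟨ν, hν⟩ := hperimMeasure E hE
  set m := ⨆ s : S, μ (E ∩ ball (s : X) 1)
  have hmtop : m ≠ ⊤ := ne_top_of_le_ne_top hEtop (iSup_le fun _ => measure_mono inter_subset_left)
  have hlocal : ∀ s : S, μ (E ∩ ball (s : X) 1) ≤ m ^ (1 / N) * CRI * ν (ball s 1) := fun s => by
    rw [hν _ isOpen_ball, mul_assoc]
    exact measure_inter_le_rpow_mul_of_min_rpow_le hN₀.le hE (hball s) (hlarge s)
      (measure_ne_top_of_subset inter_subset_left hEtop) (le_iSup_of_le s le_rfl) (hrelisop s E hE)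
  have hkey : μ E ≤ m ^ (1 / N) * (CRI * C) * Perim μ E := by
    simpa only [hν univ isOpen_univ, Perim, mul_assoc] using
      measure_le_mul_of_forall_measure_inter_le hcover hlocal (hoverlap ν)
  obtain ⟨s, hs⟩ :=
    lt_iSup_iff.1 (ENNReal.inv_two_mul_rpow_mul_div_rpow_lt hN₀ hDN hEpos.ne' hmtop hkey)
  exact ⟨s, (min_le_left _ _).trans hs.le⟩

/-- **Local mass lower bound (concentration of volume in a unit ball).**
Let `(X, d, μ)` be a metric measure space with `μ` uniformly locally doubling,
`μ(B₁(x)) ≥ v₀ > 0` for every `x`, satisfying the relative isoperimetric inequality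
`min{μ(B₁(x) ∩ E), μ(B₁(x) ∖ E)}^{1 - 1/N} ≤ C_RI · P(E, B₁(x))` for some `N > 1` and
`C_RI > 0`, and such that for every set of finite perimeter the relative perimeter is the
restriction to open sets of a Borel measure. Then there is a constant `C_M > 0` such that
every set of finite perimeter `E` with `0 < μ(E) < ∞` satisfies
`μ(E ∩ B₁(x₀)) ≥ min{C_M (μ(E)/P(E))^N, v₀/2}` for some `x₀ ∈ X`
(in `ℝ≥0∞`, division satisfies the convention `t/0 = +∞` for `t ≠ 0`). -/
theorem local_mass_lower_bound
    {X : Type*} [MetricSpace X] [MeasurableSpace X] [BorelSpace X]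
    [LocallyCompactSpace X] [TopologicalSpace.SeparableSpace X]
    (μ : Measure X) (hfin : FiniteOnBounded μ) (hsupp : FullSupport μ)
    (hdoub : UnifLocDoubling μ)
    (v₀ : ℝ≥0∞) (hv₀ : 0 < v₀) (hball : ∀ x : X, v₀ ≤ μ (ball x 1))
    (N : ℝ) (hN : 1 < N) (CRI : ℝ≥0∞) (hCRI : 0 < CRI) (hCRI' : CRI ≠ ⊤)
    (hrelisop : ∀ (x : X) (E : Set X), MeasurableSet E →
      min (μ (ball x 1 ∩ E)) (μ (ball x 1 \ E)) ^ (1 - 1/N) ≤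
        CRI * perim μ E (ball x 1))
    (hperimMeasure : ∀ E : Set X, MeasurableSet E →
      ∃ ν : Measure X, ∀ A : Set X, IsOpen A → ν A = perim μ E A) :
    ∃ CM : ℝ≥0∞, 0 < CM ∧
      ∀ E : Set X, MeasurableSet E → Perim μ E ≠ ⊤ → 0 < μ E → μ E ≠ ⊤ →
        ∃ x₀ : X, min (CM * (μ E / Perim μ E) ^ N) (v₀ / 2) ≤ μ (E ∩ ball x₀ 1) :=
  local_mass_lower_bound_general μ hfin hsupp hdoub v₀ hball N hN CRI hCRI' hrelisop hperimMeasure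

end
end
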